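/- For all integers n ≥ 0 and k ≥ 0, b_{2k+1}(8n+3) ≡ 0 (mod 4), where b_m denotes the overcubic partition m-tuples function. -/

import Mathlib

/-!
Modulo 4 each factor of `f₄ / (f₁² f₂)` is
`(1 - q⁴ⁱ) / ((1 - qⁱ)² (1 - q²ⁱ)) ≡ 1 + 2qⁱ / (1 - q²ⁱ)`.
Since `(1 + 2a)(1 + 2b) ≡ 1 + 2(a + b)` and `(1 + 2a)² ≡ 1`, the generating function
of `b_{2k+1}` is `≡ 1 + 2 ∑ᵢ qⁱ / (1 - q²ⁱ)` modulo 4, whatever `k` is. For odd `N`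
the coefficient of `q^N` in that sum is the number of divisors of `N`, which is even
when `N ≡ 3 (mod 4)`, as `N` is then not a square.
-/

open PowerSeries

/-- Truncated version of `fₖ = ∏_{i≥1} (1 - q^{k i})`: the product over `1 ≤ i ≤ N`,
which has the same coefficients as the infinite product in degrees `≤ N`. -/
noncomputable def fTrunc (k N : ℕ) : PowerSeries ℤ :=
  ∏ i ∈ Finset.Icc 1 N, (1 - (PowerSeries.X : PowerSeries ℤ) ^ (k * i))

/-- `b m n` is the `n`-th coefficient of `f₄ᵐ / (f₁^{2m} f₂ᵐ)`, the number of
overcubic partition `m`-tuples of `n`. -/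
noncomputable def b (m n : ℕ) : ℤ :=
  PowerSeries.coeff n
    ((fTrunc 4 n) ^ m * PowerSeries.invOfUnit ((fTrunc 1 n) ^ (2 * m) * (fTrunc 2 n) ^ m) 1)

open Finset

namespace Nat

theorem not_isSquare_of_mod_four_eq_three {n : ℕ} (hn : n % 4 = 3) : ¬IsSquare n := by
  rintro ⟨r, rfl⟩
  rw [Nat.mul_mod] at hn
  have := Nat.mod_lt r (show 4 > 0 by norm_num)
  interval_cases r % 4 <;> simp_all

theorem even_card_divisors_of_not_isSquare {n : ℕ} (hn : ¬IsSquare n) : Even #n.divisors := by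
  rw [← ZMod.natCast_eq_zero_iff_even, card_eq_sum_ones, Nat.cast_sum, Nat.cast_one]
  refine sum_involution (fun d _ => n / d) (fun _ _ => by decide)
    (fun d hd _ hfix => hn ⟨d, ?_⟩) (fun d hd => ?_)
    (fun d hd => Nat.div_div_self (dvd_of_mem_divisors hd) (ne_zero_of_mem_divisors hd))
  · calc n = n / d * d := (Nat.div_mul_cancel (dvd_of_mem_divisors hd)).symm
      _ = d * d := by rw [hfix]
  · exact mem_divisors.mpr
      ⟨Nat.div_dvd_of_dvd (dvd_of_mem_divisors hd), ne_zero_of_mem_divisors hd⟩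

end Nat

section FourEqZero

variable {A : Type*} [CommRing A]

theorem one_add_two_mul_pow_two_mul_add_one (h4 : (4 : A) = 0) (a : A) (k : ℕ) :
    (1 + 2 * a) ^ (2 * k + 1) = 1 + 2 * a := by
  have hsq : (1 + 2 * a) ^ 2 = 1 := by linear_combination (a + a ^ 2) * h4
  rw [pow_succ, pow_mul, hsq, one_pow, one_mul]

theorem prod_one_add_two_mul {ι : Type*} (h4 : (4 : A) = 0) (s : Finset ι) (f : ι → A) :
    ∏ i ∈ s, (1 + 2 * f i) = 1 + 2 * ∑ i ∈ s, f i := by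
  induction s using Finset.cons_induction with
  | empty => simp
  | cons i s hi ih =>
    rw [prod_cons, sum_cons, ih]
    linear_combination (f i * ∑ j ∈ s, f j) * h4

theorem one_sub_pow_four_eq_mul_one_add_two_mul (h4 : (4 : A) = 0) {x g : A}
    (hg : (1 - x ^ 2) * g = 1) :
    1 - x ^ 4 = (1 - x) ^ 2 * (1 - x ^ 2) * (1 + 2 * (x * g)) := by
  linear_combination (-2 * x * (1 - x) ^ 2) * hg - (x ^ 3 - x ^ 2) * h4

end FourEqZero

namespace PowerSeries

variable {R : Type*} [CommRing R]

theorem ofNat_eq_zero_iff {n : ℕ} [n.AtLeastTwo] :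
    (OfNat.ofNat n : R⟦X⟧) = 0 ↔ (OfNat.ofNat n : R) = 0 := by
  rw [← map_ofNat C n, map_eq_zero_iff _ C_injective]

theorem coeff_invOfUnit_one_sub_X_pow {d : ℕ} (hd : d ≠ 0) (n : ℕ) :
    coeff n (invOfUnit (1 - X ^ d : R⟦X⟧) 1) = if d ∣ n then 1 else 0 := by
  have hexpand : (1 - X ^ d : R⟦X⟧) * expand d hd (mk 1) = 1 := by
    rw [← expand_X d hd, ← map_one (expand d hd), ← map_sub, ← map_mul, mul_comm,
      mk_one_mul_one_sub_eq_one, map_one]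
  rw [left_inv_eq_right_inv (invOfUnit_mul _ 1 (by simp [hd])) hexpand, coeff_expand]
  simp

theorem coeff_X_pow_mul_invOfUnit_one_sub_X_pow_two_mul {i N : ℕ} (hi : i ≠ 0) (hN : Odd N) :
    coeff N (X ^ i * invOfUnit (1 - X ^ (2 * i) : R⟦X⟧) 1) = if i ∣ N then 1 else 0 := by
  rw [coeff_X_pow_mul', coeff_invOfUnit_one_sub_X_pow (by omega)]
  by_cases hdvd : i ∣ N
  · obtain ⟨q, rfl⟩ := hdvd
    obtain ⟨r, rfl⟩ := (Nat.odd_mul.mp hN).2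
    have hle : i ≤ i * (2 * r + 1) := Nat.le_mul_of_pos_right i (by omega)
    have hsub : i * (2 * r + 1) - i = 2 * i * r := by
      rw [Nat.mul_add, mul_one, Nat.add_sub_cancel]; ring
    simp [hle, hsub]
  · have hnot : ¬(i ≤ N ∧ 2 * i ∣ N - i) := fun ⟨hle, h⟩ =>
      hdvd <| (Nat.dvd_sub_iff_left hle dvd_rfl).mp (dvd_trans (Dvd.intro_left 2 rfl) h)
    simp_all

theorem coeff_sum_X_pow_mul_invOfUnit_one_sub_X_pow_two_mul {N : ℕ} (hN : Odd N) :
    coeff N (∑ i ∈ Icc 1 N, X ^ i * invOfUnit (1 - X ^ (2 * i)) 1 : R⟦X⟧)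
      = #N.divisors := by
  rw [map_sum, sum_congr rfl fun i hi =>
    coeff_X_pow_mul_invOfUnit_one_sub_X_pow_two_mul (R := R)
      (by have := (mem_Icc.mp hi).1; omega) hN,
    sum_boole, Nat.divisors, Ico_add_one_right_eq_Icc]

end PowerSeries

theorem map_fTrunc {R : Type*} [CommRing R] (f : ℤ →+* R) (k N : ℕ) :
    map f (fTrunc k N) = ∏ i ∈ Icc 1 N, (1 - X ^ (k * i)) := by
  simp [fTrunc, map_prod]

theorem constantCoeff_fTrunc {k : ℕ} (hk : k ≠ 0) (N : ℕ) :
    constantCoeff (fTrunc k N) = 1 := by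
  rw [fTrunc, map_prod]
  exact prod_eq_one fun i hi => by
    simp [mul_ne_zero hk (show i ≠ 0 by have := (mem_Icc.mp hi).1; omega)]

theorem intCast_b_eq_coeff_pow {R : Type*} [CommRing R] {N : ℕ} {Ψ : R⟦X⟧}
    (hΨ : map (Int.castRingHom R) (fTrunc 4 N)
      = map (Int.castRingHom R) (fTrunc 1 N) ^ 2 * map (Int.castRingHom R) (fTrunc 2 N) * Ψ)
    (m : ℕ) :
    (b m N : R) = coeff N (Ψ ^ m) := by
  set D := fTrunc 1 N ^ (2 * m) * fTrunc 2 N ^ m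
  have hD := congrArg (map (Int.castRingHom R))
    (invOfUnit_mul D 1 (by simp [D, constantCoeff_fTrunc]))
  rw [map_mul, map_one, map_mul, map_pow, map_pow] at hD
  rw [b, ← eq_intCast (Int.castRingHom R), ← coeff_map, map_mul, map_pow, hΨ]
  congr 1
  linear_combination Ψ ^ m * hD

theorem map_fTrunc_four_eq_of_four_eq_zero {R : Type*} [CommRing R] (h4 : (4 : R) = 0)
    (N : ℕ) :
    map (Int.castRingHom R) (fTrunc 4 N)
      = map (Int.castRingHom R) (fTrunc 1 N) ^ 2 * map (Int.castRingHom R) (fTrunc 2 N) *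
        ∏ i ∈ Icc 1 N, (1 + 2 * (X ^ i * invOfUnit (1 - X ^ (2 * i) : R⟦X⟧) 1)) := by
  simp only [map_fTrunc, ← prod_pow, ← prod_mul_distrib]
  refine prod_congr rfl fun i hi => ?_
  have hi : i ≠ 0 := by have := (mem_Icc.mp hi).1; omega
  rw [one_mul, pow_mul', pow_mul']
  exact one_sub_pow_four_eq_mul_one_add_two_mul (PowerSeries.ofNat_eq_zero_iff.mpr h4)
    (by rw [← pow_mul']; exact mul_invOfUnit _ 1 (by simp [hi]))

theorem stmt16 (n k : ℕ) : b (2 * k + 1) (8 * n + 3) ≡ 0 [ZMOD 4] := by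
  have h4 : (4 : ZMod 4) = 0 := rfl
  have h4X : (4 : (ZMod 4)⟦X⟧) = 0 := PowerSeries.ofNat_eq_zero_iff.mpr h4
  have hN : Odd (8 * n + 3) := ⟨4 * n + 1, by ring⟩
  obtain ⟨j, hj⟩ := Nat.even_card_divisors_of_not_isSquare
    (Nat.not_isSquare_of_mod_four_eq_three (n := 8 * n + 3) (by omega))
  apply (ZMod.intCast_eq_intCast_iff _ _ 4).mp
  rw [intCast_b_eq_coeff_pow (map_fTrunc_four_eq_of_four_eq_zero h4 _), prod_one_add_two_mul h4X,
    one_add_two_mul_pow_two_mul_add_one h4X, map_add, coeff_one, if_neg hN.pos.ne', zero_add,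
    ← map_ofNat C 2, coeff_C_mul,
    PowerSeries.coeff_sum_X_pow_mul_invOfUnit_one_sub_X_pow_two_mul hN, hj]
  push_cast
  linear_combination j * h4
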